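/- arXiv:math/0009048 — 4 statements merged into one kernel-verified Lean document; each statement's English description precedes it below -/
import Mathlib

section
/- If H and K are n×n Hermitian matrices with n ≥ 1, then equality λ₁(H+K) = λ₁(H) + λ₁(K) holds if and only if there exists a nonzero vector v that is simultaneously an eigenvector of H for its largest eigenvalue and an eigenvector of K for its largest eigenvalue. -/
open Matrix
open scoped ComplexOrder

noncomputable section

variable {m : Type*} [Fintype m] [DecidableEq m] [Nonempty m]

omit [DecidableEq m] [Nonempty m] in
private lemma aux_dot {v : m → ℂ} (hv : v ≠ 0) {r : ℝ}
    (h : 0 ≤ (r : ℂ) * (star v ⬝ᵥ v)) : 0 ≤ r := by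
  by_contra h'
  push_neg at h'
  have hvv : 0 < star v ⬝ᵥ v := dotProduct_star_self_pos_iff.mpr hv
  have h2 : 0 < ((-r : ℝ) : ℂ) * (star v ⬝ᵥ v) :=
    mul_pos (Complex.zero_lt_real.mpr (by linarith)) hvv
  rw [Complex.ofReal_neg, neg_mul] at h2
  have := h2.trans_le (neg_nonpos_of_nonneg h)
  exact absurd this (lt_irrefl 0)

omit [Nonempty m] in
private lemma aux_psd {A : Matrix m m ℂ} (hA : A.IsHermitian) :
    (((⨆ i, hA.eigenvalues i : ℝ) : ℂ) • (1 : Matrix m m ℂ) - A).PosSemidef := by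
  set c : ℝ := ⨆ i, hA.eigenvalues i with hc
  have hU : (hA.eigenvectorUnitary : Matrix m m ℂ) * star (hA.eigenvectorUnitary : Matrix m m ℂ)
      = 1 := Matrix.mem_unitaryGroup_iff.mp hA.eigenvectorUnitary.2
  have hdiag : Matrix.diagonal (fun i => ((c - hA.eigenvalues i : ℝ) : ℂ)) =
      (c : ℂ) • (1 : Matrix m m ℂ) - diagonal (RCLike.ofReal ∘ hA.eigenvalues) := by
    ext i j
    by_cases hij : i = j <;>
      simp [hij, diagonal, Matrix.one_apply, Complex.ofReal_sub]
  have key : ((c : ℂ) • (1 : Matrix m m ℂ) - A) =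
      (hA.eigenvectorUnitary : Matrix m m ℂ) *
        diagonal (fun i => ((c - hA.eigenvalues i : ℝ) : ℂ)) *
        (hA.eigenvectorUnitary : Matrix m m ℂ)ᴴ := by
    rw [← Matrix.star_eq_conjTranspose, hdiag, mul_sub, sub_mul, Matrix.mul_smul,
      Matrix.smul_mul, mul_one, hU, ← Unitary.conjStarAlgAut_apply (S := ℂ), ← hA.spectral_theorem]
  rw [key]
  refine (Matrix.PosSemidef.diagonal ?_).mul_mul_conjTranspose_same _
  intro i
  refine Complex.zero_le_real.mpr (sub_nonneg.mpr ?_)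
  exact le_ciSup (Set.Finite.bddAbove (Set.finite_range _)) i

private lemma aux_le {A : Matrix m m ℂ} (hA : A.IsHermitian) {v : m → ℂ} (hv : v ≠ 0)
    {μ : ℝ} (h : A *ᵥ v = (μ : ℂ) • v) : μ ≤ ⨆ i, hA.eigenvalues i := by
  set c : ℝ := ⨆ i, hA.eigenvalues i with hc
  have h0 := (aux_psd hA).dotProduct_mulVec_nonneg v
  have hmv : ((c : ℂ) • (1 : Matrix m m ℂ) - A) *ᵥ v = ((c - μ : ℝ) : ℂ) • v := by
    rw [sub_mulVec, smul_mulVec, one_mulVec, h, Complex.ofReal_sub, sub_smul]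
  rw [hmv, dotProduct_smul, smul_eq_mul] at h0
  linarith [aux_dot hv h0]

theorem largest_eigenvalue_sum_eq_iff {n : ℕ} (hn : 1 ≤ n) {H K : Matrix (Fin n) (Fin n) ℂ}
    (hH : H.IsHermitian) (hK : K.IsHermitian) :
    (⨆ i, (hH.add hK).eigenvalues i) = (⨆ i, hH.eigenvalues i) + (⨆ i, hK.eigenvalues i) ↔
      ∃ v : Fin n → ℂ, v ≠ 0 ∧
        H.mulVec v = ((⨆ i, hH.eigenvalues i : ℝ) : ℂ) • v ∧
        K.mulVec v = ((⨆ i, hK.eigenvalues i : ℝ) : ℂ) • v := by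
  have : Nonempty (Fin n) := ⟨⟨0, hn⟩⟩
  set a : ℝ := ⨆ i, hH.eigenvalues i with ha
  set b : ℝ := ⨆ i, hK.eigenvalues i with hb
  set s : ℝ := ⨆ i, (hH.add hK).eigenvalues i with hs
  obtain ⟨j, hj⟩ := exists_eq_ciSup_of_finite (f := (hH.add hK).eigenvalues)
  set w : Fin n → ℂ := ⇑((hH.add hK).eigenvectorBasis j) with hw
  have hw0 : w ≠ 0 := by
    intro h0
    have h1 : ‖(hH.add hK).eigenvectorBasis j‖ = 1 :=
      (hH.add hK).eigenvectorBasis.orthonormal.1 j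
    rw [show ((hH.add hK).eigenvectorBasis j) = 0 from WithLp.ofLp_injective 2 h0] at h1
    simp at h1
  have hweig : (H + K) *ᵥ w = (s : ℂ) • w := by
    have h2 := (hH.add hK).mulVec_eigenvectorBasis j
    rw [hj] at h2
    rw [hw]
    refine h2.trans ?_
    funext i
    simp only [Pi.smul_apply]
    exact Complex.real_smul
  have pH := aux_psd hH
  have pK := aux_psd hK
  have hq1 := pH.dotProduct_mulVec_nonneg w
  have hq2 := pK.dotProduct_mulVec_nonneg w
  have hmv : (((a : ℂ) • (1 : Matrix (Fin n) (Fin n) ℂ) - H) +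
      ((b : ℂ) • (1 : Matrix (Fin n) (Fin n) ℂ) - K)) *ᵥ w
      = ((a + b - s : ℝ) : ℂ) • w := by
    rw [add_mulVec, sub_mulVec, sub_mulVec, smul_mulVec, smul_mulVec,
      one_mulVec]
    have hhk : H *ᵥ w + K *ᵥ w = (s : ℂ) • w := by rw [← add_mulVec]; exact hweig
    calc ((a : ℂ) • w - H *ᵥ w) + ((b : ℂ) • w - K *ᵥ w)
        = ((a : ℂ) • w + (b : ℂ) • w) - (H *ᵥ w + K *ᵥ w) := by abel
      _ = ((a + b - s : ℝ) : ℂ) • w := by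
          rw [hhk, ← add_smul]
          push_cast
          rw [sub_smul]
  have hdsum : star w ⬝ᵥ ((a : ℂ) • (1 : Matrix (Fin n) (Fin n) ℂ) - H) *ᵥ w +
      star w ⬝ᵥ ((b : ℂ) • (1 : Matrix (Fin n) (Fin n) ℂ) - K) *ᵥ w
      = ((a + b - s : ℝ) : ℂ) * (star w ⬝ᵥ w) := by
    rw [← dotProduct_add, ← add_mulVec, hmv, dotProduct_smul, smul_eq_mul]
  constructor
  · intro heq
    refine ⟨w, hw0, ?_⟩
    have hzero : ((a + b - s : ℝ) : ℂ) = 0 := by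
      rw [ha, hb, hs] at heq ⊢
      rw [Complex.ofReal_eq_zero]
      linarith [heq]
    rw [hzero, zero_mul] at hdsum
    have e1 : star w ⬝ᵥ ((a : ℂ) • (1 : Matrix (Fin n) (Fin n) ℂ) - H) *ᵥ w = 0 :=
      le_antisymm (by rw [← hdsum]; simpa using hq2) hq1
    have e2 : star w ⬝ᵥ ((b : ℂ) • (1 : Matrix (Fin n) (Fin n) ℂ) - K) *ᵥ w = 0 :=
      le_antisymm (by rw [← hdsum]; simpa using hq1) hq2
    have f1 := (pH.dotProduct_mulVec_zero_iff w).mp e1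
    have f2 := (pK.dotProduct_mulVec_zero_iff w).mp e2
    rw [sub_mulVec, smul_mulVec, one_mulVec, sub_eq_zero] at f1 f2
    exact ⟨f1.symm, f2.symm⟩
  · rintro ⟨v, hv, h1, h2⟩
    have hle1 : a + b ≤ s := by
      refine aux_le (hH.add hK) hv ?_
      rw [add_mulVec, h1, h2, ← add_smul, Complex.ofReal_add]
    have h0 : 0 ≤ ((a + b - s : ℝ) : ℂ) * (star w ⬝ᵥ w) := by
      rw [← hdsum]; exact add_nonneg hq1 hq2
    have hle2 : s ≤ a + b := by linarith [aux_dot hw0 h0]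
    linarith
end
end

section
/- For Hermitian matrices H and K of size n, and indices i, j ≥ 0 with i + j + 1 ≤ n, the (i+j+1)-st largest eigenvalue of H + K is at most the sum of the (i+1)-st largest eigenvalue of H and the (j+1)-st largest eigenvalue of K (Weyl's inequality). -/
open Matrix

noncomputable section

/-- `A` is Hermitian with spectrum (multiset of eigenvalues with multiplicity) given by `l`. -/
def hasSpectrum {n : ℕ} (A : Matrix (Fin n) (Fin n) ℂ) (l : Fin n → ℝ) : Prop :=
  ∃ hA : A.IsHermitian, ∃ σ : Equiv.Perm (Fin n), ∀ i, hA.eigenvalues (σ i) = l i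

open Submodule Finset

section Aux
variable {n : ℕ} {A : Matrix (Fin n) (Fin n) ℂ}

lemma repr_toEuclideanLin (hA : A.IsHermitian) (x : EuclideanSpace ℂ (Fin n)) (k : Fin n) :
    hA.eigenvectorBasis.repr (Matrix.toEuclideanLin A x) k
      = hA.eigenvalues k * hA.eigenvectorBasis.repr x k := by
  have hsymm := (Matrix.isHermitian_iff_isSymmetric).mp hA
  rw [OrthonormalBasis.repr_apply_apply, OrthonormalBasis.repr_apply_apply,
    ← hsymm (hA.eigenvectorBasis k) x]
  have : Matrix.toEuclideanLin A (hA.eigenvectorBasis k)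
      = (hA.eigenvalues k : ℂ) • (hA.eigenvectorBasis k) := by
    apply PiLp.ext
    intro m
    have := congrFun (hA.mulVec_eigenvectorBasis k) m
    simpa [Matrix.toEuclideanLin_apply] using this
  rw [this, inner_smul_left]
  simp

lemma re_inner_toEuclideanLin (hA : A.IsHermitian) (x : EuclideanSpace ℂ (Fin n)) :
    Complex.re (inner ℂ x (Matrix.toEuclideanLin A x) : ℂ)
      = ∑ k, hA.eigenvalues k * ‖hA.eigenvectorBasis.repr x k‖ ^ 2 := by
  rw [← hA.eigenvectorBasis.repr.inner_map_map x (Matrix.toEuclideanLin A x)]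
  rw [PiLp.inner_apply]
  rw [Complex.re_sum]
  refine Finset.sum_congr rfl fun k _ => ?_
  rw [repr_toEuclideanLin hA x k]
  rw [RCLike.inner_apply]
  set c := hA.eigenvectorBasis.repr x k
  have : ↑(hA.eigenvalues k) * c * (starRingEnd ℂ) c = (hA.eigenvalues k : ℂ) * ((starRingEnd ℂ) c * c) := by ring
  rw [this, RCLike.conj_mul]
  simp [← Complex.ofReal_pow]

lemma norm_sq_repr (hA : A.IsHermitian) (x : EuclideanSpace ℂ (Fin n)) :
    ‖x‖ ^ 2 = ∑ k, ‖hA.eigenvectorBasis.repr x k‖ ^ 2 := by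
  rw [← hA.eigenvectorBasis.repr.norm_map x, EuclideanSpace.norm_eq]
  rw [Real.sq_sqrt (by positivity)]

lemma repr_eq_zero_of_mem_span (b : OrthonormalBasis (Fin n) ℂ (EuclideanSpace ℂ (Fin n)))
    (S : Set (Fin n)) {x : EuclideanSpace ℂ (Fin n)} (hx : x ∈ span ℂ (⇑b '' S))
    {k : Fin n} (hk : k ∉ S) : b.repr x k = 0 := by
  rw [← b.coe_toBasis] at hx
  rw [← b.coe_toBasis_repr_apply]
  have h := (Module.Basis.mem_span_image _).mp hx
  by_contra hne
  exact hk (h (Finsupp.mem_support_iff.mpr hne))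

lemma quad_le_of_mem_span (hA : A.IsHermitian) {c : ℝ} {S : Set (Fin n)}
    (hS : ∀ k ∈ S, hA.eigenvalues k ≤ c) {x : EuclideanSpace ℂ (Fin n)}
    (hx : x ∈ span ℂ (⇑hA.eigenvectorBasis '' S)) :
    Complex.re (inner ℂ x (Matrix.toEuclideanLin A x) : ℂ) ≤ c * ‖x‖ ^ 2 := by
  rw [re_inner_toEuclideanLin hA, norm_sq_repr hA, Finset.mul_sum]
  refine Finset.sum_le_sum fun k _ => ?_
  by_cases hk : k ∈ S
  · exact mul_le_mul_of_nonneg_right (hS k hk) (by positivity)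
  · rw [repr_eq_zero_of_mem_span _ S hx hk]; simp

lemma quad_ge_of_mem_span (hA : A.IsHermitian) {c : ℝ} {S : Set (Fin n)}
    (hS : ∀ k ∈ S, c ≤ hA.eigenvalues k) {x : EuclideanSpace ℂ (Fin n)}
    (hx : x ∈ span ℂ (⇑hA.eigenvectorBasis '' S)) :
    c * ‖x‖ ^ 2 ≤ Complex.re (inner ℂ x (Matrix.toEuclideanLin A x) : ℂ) := by
  rw [re_inner_toEuclideanLin hA, norm_sq_repr hA, Finset.mul_sum]
  refine Finset.sum_le_sum fun k _ => ?_
  by_cases hk : k ∈ S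
  · exact mul_le_mul_of_nonneg_right (hS k hk) (by positivity)
  · rw [repr_eq_zero_of_mem_span _ S hx hk]; simp

lemma finrank_span_ob (b : OrthonormalBasis (Fin n) ℂ (EuclideanSpace ℂ (Fin n)))
    (S : Set (Fin n)) [Fintype S] :
    Module.finrank ℂ (span ℂ (⇑b '' S)) = Fintype.card S := by
  classical
  rw [Set.image_eq_range]
  exact finrank_span_eq_card ((b.orthonormal.linearIndependent).comp _ Subtype.val_injective)

lemma exists_ne_zero_triple {E : Type*} [NormedAddCommGroup E] [InnerProductSpace ℂ E]
    [FiniteDimensional ℂ E] (U V W : Submodule ℂ E)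
    (h : 2 * Module.finrank ℂ E < Module.finrank ℂ U + Module.finrank ℂ V + Module.finrank ℂ W) :
    ∃ x, x ∈ U ⊓ V ⊓ W ∧ x ≠ 0 := by
  have h1 := Submodule.finrank_sup_add_finrank_inf_eq U V
  have h2 := Submodule.finrank_sup_add_finrank_inf_eq (U ⊓ V) W
  have h3 := Submodule.finrank_le (U ⊔ V)
  have h4 := Submodule.finrank_le ((U ⊓ V) ⊔ W)
  have hpos : 0 < Module.finrank ℂ ((U ⊓ V ⊓ W : Submodule ℂ E)) := by omega
  have hne : (U ⊓ V ⊓ W : Submodule ℂ E) ≠ ⊥ := by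
    intro hb
    rw [hb, finrank_bot] at hpos
    exact lt_irrefl 0 hpos
  obtain ⟨x, hx, hx0⟩ := Submodule.exists_mem_ne_zero_of_ne_bot hne
  exact ⟨x, hx, hx0⟩

lemma card_ge {i : ℕ} (h : i < n) : Fintype.card {k : Fin n // i ≤ (k:ℕ)} = n - i := by
  rw [Fintype.card_subtype]
  have : Finset.filter (fun k : Fin n => i ≤ (k:ℕ)) Finset.univ = Finset.Ici ⟨i, h⟩ := by
    ext k; simp [Fin.le_def]
  rw [this, Fin.card_Ici]

lemma card_le {i : ℕ} (h : i < n) : Fintype.card {k : Fin n // (k:ℕ) ≤ i} = i + 1 := by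
  rw [Fintype.card_subtype]
  have : Finset.filter (fun k : Fin n => (k:ℕ) ≤ i) Finset.univ = Finset.Iic ⟨i, h⟩ := by
    ext k; simp [Fin.le_def]
  rw [this, Fin.card_Iic]

end Aux

/-- Weyl's inequality: $\nu_{i+j+1} \le \lambda_{i+1} + \mu_{j+1}$ (0-based indices). -/
theorem weyl_inequality {n : ℕ} (i j : ℕ) (hij : i + j < n)
    {H K : Matrix (Fin n) (Fin n) ℂ}
    (lam mu nu : Fin n → ℝ) (hlam : Antitone lam) (hmu : Antitone mu) (hnu : Antitone nu)
    (hHs : hasSpectrum H lam) (hKs : hasSpectrum K mu) (hHK : hasSpectrum (H + K) nu) :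
    nu ⟨i + j, hij⟩ ≤ lam ⟨i, by omega⟩ + mu ⟨j, by omega⟩ := by
  classical
  obtain ⟨hH, σ, hσ⟩ := hHs
  obtain ⟨hK, τ, hτ⟩ := hKs
  obtain ⟨hS, ρ, hρ⟩ := hHK
  set U := span ℂ (⇑hH.eigenvectorBasis '' (⇑σ '' {k : Fin n | i ≤ (k:ℕ)})) with hU
  set V := span ℂ (⇑hK.eigenvectorBasis '' (⇑τ '' {k : Fin n | j ≤ (k:ℕ)})) with hV
  set W := span ℂ (⇑hS.eigenvectorBasis '' (⇑ρ '' {k : Fin n | (k:ℕ) ≤ i + j})) with hW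
  have hdimU : Module.finrank ℂ U = n - i := by
    rw [hU, finrank_span_ob, Set.card_image_of_injective _ σ.injective]
    exact card_ge (by omega)
  have hdimV : Module.finrank ℂ V = n - j := by
    rw [hV, finrank_span_ob, Set.card_image_of_injective _ τ.injective]
    exact card_ge (by omega)
  have hdimW : Module.finrank ℂ W = i + j + 1 := by
    rw [hW, finrank_span_ob, Set.card_image_of_injective _ ρ.injective]
    exact card_le hij
  obtain ⟨x, hx, hx0⟩ := exists_ne_zero_triple U V W (by
    rw [hdimU, hdimV, hdimW, finrank_euclideanSpace, Fintype.card_fin]; omega)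
  obtain ⟨⟨hxU, hxV⟩, hxW⟩ := hx
  have hnorm : (0:ℝ) < ‖x‖ ^ 2 := by
    have := norm_pos_iff.mpr hx0
    positivity
  have hHb : Complex.re (inner ℂ x (Matrix.toEuclideanLin H x) : ℂ) ≤ lam ⟨i, by omega⟩ * ‖x‖ ^ 2 := by
    refine quad_le_of_mem_span hH ?_ hxU
    rintro m ⟨k, hk, rfl⟩
    rw [hσ k]
    exact hlam (by simpa [Fin.le_def] using hk)
  have hKb : Complex.re (inner ℂ x (Matrix.toEuclideanLin K x) : ℂ) ≤ mu ⟨j, by omega⟩ * ‖x‖ ^ 2 := by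
    refine quad_le_of_mem_span hK ?_ hxV
    rintro m ⟨k, hk, rfl⟩
    rw [hτ k]
    exact hmu (by simpa [Fin.le_def] using hk)
  have hSb : nu ⟨i + j, hij⟩ * ‖x‖ ^ 2
      ≤ Complex.re (inner ℂ x (Matrix.toEuclideanLin (H + K) x) : ℂ) := by
    refine quad_ge_of_mem_span hS ?_ hxW
    rintro m ⟨k, hk, rfl⟩
    rw [hρ k]
    exact hnu (by simpa [Fin.le_def] using hk)
  have hadd : Complex.re (inner ℂ x (Matrix.toEuclideanLin (H + K) x) : ℂ)
      = Complex.re (inner ℂ x (Matrix.toEuclideanLin H x) : ℂ)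
        + Complex.re (inner ℂ x (Matrix.toEuclideanLin K x) : ℂ) := by
    rw [map_add, LinearMap.add_apply, inner_add_right, Complex.add_re]
  have key : nu ⟨i + j, hij⟩ * ‖x‖ ^ 2 ≤ (lam ⟨i, by omega⟩ + mu ⟨j, by omega⟩) * ‖x‖ ^ 2 := by
    rw [add_mul]
    calc nu ⟨i + j, hij⟩ * ‖x‖ ^ 2 ≤ _ := hSb
    _ = _ := hadd
    _ ≤ _ := add_le_add hHb hKb
  exact le_of_mul_le_mul_right key hnorm
end
end

section
/- Let λ₁ ≥ λ₂, μ₁ ≥ μ₂, ν₁ ≥ ν₂ be real numbers with λ₁+λ₂+μ₁+μ₂+ν₁+ν₂ = 0. There exist 2×2 Hermitian matrices A, B, C with spectra (λ₁,λ₂), (μ₁,μ₂), (ν₁,ν₂) respectively and A + B + C = 0 if and only if λ₂+μ₁+ν₁ ≥ 0, λ₁+μ₂+ν₁ ≥ 0, and λ₁+μ₁+ν₂ ≥ 0. -/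
open Matrix

noncomputable section

open ComplexOrder in
lemma aux_trace_eq_sum {n : Type*} [Fintype n] [DecidableEq n] {A : Matrix n n ℂ}
    (hA : A.IsHermitian) : A.trace = ∑ i, (hA.eigenvalues i : ℂ) := by
  conv_lhs => rw [hA.spectral_theorem, Unitary.conjStarAlgAut_apply]
  rw [Matrix.trace_mul_cycle, Unitary.coe_star_mul_self, Matrix.one_mul, Matrix.trace_diagonal]
  rfl

open ComplexOrder in
lemma aux_shift_psd {n : Type*} [Fintype n] [DecidableEq n] {B : Matrix n n ℂ}
    (hB : B.IsHermitian) (c : ℝ) (h : ∀ i, hB.eigenvalues i ≤ c) :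
    ((c : ℂ) • (1 : Matrix n n ℂ) - B).PosSemidef := by
  have hU : (hB.eigenvectorUnitary : Matrix n n ℂ) *
      star (hB.eigenvectorUnitary : Matrix n n ℂ) = 1 := Unitary.coe_mul_star_self _
  have key : (c : ℂ) • (1 : Matrix n n ℂ) - B =
      (hB.eigenvectorUnitary : Matrix n n ℂ) *
        Matrix.diagonal (fun i => (c : ℂ) - (hB.eigenvalues i : ℂ)) *
        star (hB.eigenvectorUnitary : Matrix n n ℂ) := by
    conv_lhs => rw [hB.spectral_theorem, Unitary.conjStarAlgAut_apply]
    have : Matrix.diagonal (fun i => (c : ℂ) - (hB.eigenvalues i : ℂ)) =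
        (c : ℂ) • (1 : Matrix n n ℂ) - Matrix.diagonal (RCLike.ofReal ∘ hB.eigenvalues) := by
      rw [Matrix.smul_one_eq_diagonal, Matrix.diagonal_sub]; rfl
    rw [this, Matrix.mul_sub, Matrix.sub_mul, Matrix.mul_smul, Matrix.mul_one, Matrix.smul_mul, hU]
  rw [key]
  have hd : (Matrix.diagonal (fun i => (c : ℂ) - (hB.eigenvalues i : ℂ))).PosSemidef := by
    refine Matrix.posSemidef_diagonal_iff.mpr fun i => ?_
    rw [← Complex.ofReal_sub]
    exact_mod_cast sub_nonneg.mpr (h i)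
  have := hd.mul_mul_conjTranspose_same (hB.eigenvectorUnitary : Matrix n n ℂ)
  rwa [Matrix.star_eq_conjTranspose]

lemma aux_rayleigh_le {n : Type*} [Fintype n] [DecidableEq n] {B : Matrix n n ℂ}
    (hB : B.IsHermitian) (c : ℝ) (h : ∀ i, hB.eigenvalues i ≤ c) (x : n → ℂ)
    (hx : dotProduct (star x) x = 1) :
    Complex.re (dotProduct (star x) (B *ᵥ x)) ≤ c := by
  have h0 := (aux_shift_psd hB c h).re_dotProduct_nonneg x
  rw [Matrix.sub_mulVec, dotProduct_sub, Matrix.smul_mulVec, Matrix.one_mulVec,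
    dotProduct_smul, hx] at h0
  simp at h0
  linarith

lemma aux_unit {B : Matrix (Fin 2) (Fin 2) ℂ} (hB : B.IsHermitian) (i : Fin 2) :
    dotProduct (star ⇑(hB.eigenvectorBasis i)) ⇑(hB.eigenvectorBasis i) = 1 := by
  have h := hB.eigenvectorBasis.orthonormal.1 i
  have h2 : (inner ℂ (hB.eigenvectorBasis i) (hB.eigenvectorBasis i) : ℂ) = 1 := by
    rw [inner_self_eq_norm_sq_to_K, h]; norm_num
  rw [EuclideanSpace.inner_eq_star_dotProduct] at h2
  rwa [dotProduct_comm] at h2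

lemma aux_forward {A B C : Matrix (Fin 2) (Fin 2) ℂ} {a2 b1 c1 : ℝ}
    (hA : A.IsHermitian) (iA : Fin 2) (haA : hA.eigenvalues iA = a2)
    (hB : B.IsHermitian) (hBle : ∀ i, hB.eigenvalues i ≤ b1)
    (hC : C.IsHermitian) (hCle : ∀ i, hC.eigenvalues i ≤ c1)
    (hsum : A + B + C = 0) : 0 ≤ a2 + b1 + c1 := by
  set x : Fin 2 → ℂ := ⇑(hA.eigenvectorBasis iA) with hxdef
  have hx : dotProduct (star x) x = 1 := aux_unit hA iA
  have hAx : Complex.re (dotProduct (star x) (A *ᵥ x)) = a2 := by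
    rw [← haA]; exact (hA.eigenvalues_eq iA).symm
  have hBx := aux_rayleigh_le hB b1 hBle x hx
  have hCx := aux_rayleigh_le hC c1 hCle x hx
  have h0 : dotProduct (star x) ((A + B + C) *ᵥ x) = 0 := by
    rw [hsum, Matrix.zero_mulVec, dotProduct_zero]
  rw [Matrix.add_mulVec, Matrix.add_mulVec, dotProduct_add, dotProduct_add] at h0
  have h1 := congrArg Complex.re h0
  simp only [Complex.add_re, Complex.zero_re] at h1
  linarith

lemma aux_le_max {M : Matrix (Fin 2) (Fin 2) ℂ} {a b : ℝ} (hab : b ≤ a)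
    (hM : M.IsHermitian) (σ : Equiv.Perm (Fin 2)) (hσ : ∀ i, hM.eigenvalues (σ i) = ![a, b] i) :
    ∀ i, hM.eigenvalues i ≤ a := by
  intro i
  have h1 := hσ (σ.symm i)
  rw [Equiv.apply_symm_apply] at h1
  have h2 : ∀ j : Fin 2, ![a, b] j ≤ a := by
    intro j; fin_cases j <;> simp [hab]
  calc hM.eigenvalues i = ![a, b] (σ.symm i) := h1
    _ ≤ a := h2 _

lemma aux_hasSpectrum_mk {M : Matrix (Fin 2) (Fin 2) ℂ} (hM : M.IsHermitian) (a b : ℝ)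
    (htr : M.trace = (a : ℂ) + b) (hdet : M.det = (a : ℂ) * b) : hasSpectrum M ![a, b] := by
  have hs : hM.eigenvalues 0 + hM.eigenvalues 1 = a + b := by
    have h := aux_trace_eq_sum hM
    rw [htr, Fin.sum_univ_two] at h
    exact_mod_cast h.symm
  have hp : hM.eigenvalues 0 * hM.eigenvalues 1 = a * b := by
    have h := hM.det_eq_prod_eigenvalues
    rw [hdet, Fin.prod_univ_two, ← RCLike.ofReal_mul,
      show (RCLike.ofReal : ℝ → ℂ) = Complex.ofReal from rfl] at h
    exact_mod_cast h.symm
  have h0 : (hM.eigenvalues 0 - a) * (hM.eigenvalues 0 - b) = 0 := by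
    linear_combination hM.eigenvalues 0 * hs - hp
  rcases mul_eq_zero.mp h0 with h | h
  · have ea : hM.eigenvalues 0 = a := by linarith
    have eb : hM.eigenvalues 1 = b := by linarith
    refine ⟨hM, Equiv.refl _, fun i => ?_⟩
    fin_cases i <;> simp [ea, eb]
  · have eb : hM.eigenvalues 0 = b := by linarith
    have ea : hM.eigenvalues 1 = a := by linarith
    refine ⟨hM, Equiv.swap 0 1, fun i => ?_⟩
    fin_cases i <;> simp [Equiv.swap_apply_left, Equiv.swap_apply_right, ea, eb]

lemma aux_ivt (l1 l2 m1 m2 v1 v2 : ℝ)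
    (hv : v1 ≥ v2) (htrace : l1 + l2 + m1 + m2 + v1 + v2 = 0)
    (h1 : l2 + m1 + v1 ≥ 0) (h2 : l1 + m2 + v1 ≥ 0) (h3 : l1 + m1 + v2 ≥ 0) :
    ∃ t : ℝ, 0 ≤ t ∧ t ≤ 1 ∧
      (l1 + (m1 * t + m2 * (1 - t))) * (l2 + (m1 * (1 - t) + m2 * t)) -
        (m1 - m2) ^ 2 * (t * (1 - t)) = v1 * v2 := by
  have hsub := intermediate_value_Icc'
    (f := fun t : ℝ => (l1 + (m1 * t + m2 * (1 - t))) * (l2 + (m1 * (1 - t) + m2 * t)) -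
        (m1 - m2) ^ 2 * (t * (1 - t)))
    (show (0:ℝ) ≤ 1 by norm_num) (Continuous.continuousOn (by continuity))
  have hmem : v1 * v2 ∈ Set.Icc ((l1 + (m1 * 1 + m2 * (1 - 1))) * (l2 + (m1 * (1 - 1) + m2 * 1)) -
        (m1 - m2) ^ 2 * (1 * (1 - 1)))
      ((l1 + (m1 * 0 + m2 * (1 - 0))) * (l2 + (m1 * (1 - 0) + m2 * 0)) -
        (m1 - m2) ^ 2 * (0 * (1 - 0))) := by
    have hP : (0:ℝ) ≤ (l1 + m1 + v1) * (l1 + m1 + v2) :=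
      mul_nonneg (by linarith) (by linarith)
    have hQ : (0:ℝ) ≤ (l1 + m2 + v1) * (-(l1 + m2 + v2)) :=
      mul_nonneg (by linarith) (by linarith)
    constructor
    · have key : (l1 + (m1 * 1 + m2 * (1 - 1))) * (l2 + (m1 * (1 - 1) + m2 * 1)) -
          (m1 - m2) ^ 2 * (1 * (1 - 1)) =
          v1 * v2 - (l1 + m1 + v1) * (l1 + m1 + v2) +
            (l1 + m1) * (l1 + l2 + m1 + m2 + v1 + v2) := by ring
      rw [key, htrace, mul_zero]
      linarith
    · have key : (l1 + (m1 * 0 + m2 * (1 - 0))) * (l2 + (m1 * (1 - 0) + m2 * 0)) -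
          (m1 - m2) ^ 2 * (0 * (1 - 0)) =
          v1 * v2 + (l1 + m2 + v1) * (-(l1 + m2 + v2)) +
            (l1 + m2) * (l1 + l2 + m1 + m2 + v1 + v2) := by ring
      rw [key, htrace, mul_zero]
      linarith
  obtain ⟨t, ht, hft⟩ := hsub hmem
  exact ⟨t, ht.1, ht.2, hft⟩

theorem two_by_two_horn (l1 l2 m1 m2 v1 v2 : ℝ)
    (hl : l1 ≥ l2) (hm : m1 ≥ m2) (hv : v1 ≥ v2)
    (htrace : l1 + l2 + m1 + m2 + v1 + v2 = 0) :
    (∃ A B C : Matrix (Fin 2) (Fin 2) ℂ,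
        hasSpectrum A ![l1, l2] ∧ hasSpectrum B ![m1, m2] ∧ hasSpectrum C ![v1, v2] ∧
        A + B + C = 0) ↔
      (l2 + m1 + v1 ≥ 0 ∧ l1 + m2 + v1 ≥ 0 ∧ l1 + m1 + v2 ≥ 0) := by
  constructor
  · rintro ⟨A, B, C, ⟨hA, σA, hσA⟩, ⟨hB, σB, hσB⟩, ⟨hC, σC, hσC⟩, hsum⟩
    have hBle : ∀ i, hB.eigenvalues i ≤ m1 := aux_le_max hm hB σB hσB
    have hCle : ∀ i, hC.eigenvalues i ≤ v1 := aux_le_max hv hC σC hσC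
    have hAle : ∀ i, hA.eigenvalues i ≤ l1 := aux_le_max hl hA σA hσA
    have hA2 : hA.eigenvalues (σA 1) = l2 := by simpa using hσA 1
    have hB2 : hB.eigenvalues (σB 1) = m2 := by simpa using hσB 1
    have hC2 : hC.eigenvalues (σC 1) = v2 := by simpa using hσC 1
    refine ⟨?_, ?_, ?_⟩
    · have := aux_forward hA (σA 1) hA2 hB hBle hC hCle hsum
      linarith
    · have := aux_forward hB (σB 1) hB2 hA hAle hC hCle (by rw [← hsum]; abel)
      linarith
    · have := aux_forward hC (σC 1) hC2 hA hAle hB hBle (by rw [← hsum]; abel)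
      linarith
  · rintro ⟨h1, h2, h3⟩
    obtain ⟨t, ht0, ht1, hft⟩ := aux_ivt l1 l2 m1 m2 v1 v2 hv htrace h1 h2 h3
    set s : ℝ := Real.sqrt (t * (1 - t)) with hsdef
    have hs2 : s ^ 2 = t * (1 - t) := Real.sq_sqrt (by nlinarith)
    set x : ℝ := (m1 - m2) * s with hxdef
    have hx2 : x ^ 2 = (m1 - m2) ^ 2 * (t * (1 - t)) := by rw [hxdef, mul_pow, hs2]
    set A : Matrix (Fin 2) (Fin 2) ℂ := !![(l1 : ℂ), 0; 0, (l2 : ℂ)] with hAdef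
    set B : Matrix (Fin 2) (Fin 2) ℂ :=
      !![((m1 * t + m2 * (1 - t) : ℝ) : ℂ), ((x : ℝ) : ℂ);
         ((x : ℝ) : ℂ), ((m1 * (1 - t) + m2 * t : ℝ) : ℂ)] with hBdef
    have hAherm : A.IsHermitian := by
      show Aᴴ = A
      ext i j
      fin_cases i <;> fin_cases j <;>
        simp [hAdef, Matrix.conjTranspose_apply, Complex.conj_ofReal]
    have hBherm : B.IsHermitian := by
      show Bᴴ = B
      ext i j
      fin_cases i <;> fin_cases j <;>
        simp [hBdef, Matrix.conjTranspose_apply, Complex.conj_ofReal]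
    refine ⟨A, B, -(A + B), ?_, ?_, ?_, by abel⟩
    · apply aux_hasSpectrum_mk hAherm
      · rw [hAdef, Matrix.trace_fin_two_of]
      · rw [hAdef, Matrix.det_fin_two_of]; ring
    · apply aux_hasSpectrum_mk hBherm
      · rw [hBdef, Matrix.trace_fin_two_of, ← Complex.ofReal_add]
        norm_cast
        ring
      · rw [hBdef, Matrix.det_fin_two_of]
        norm_cast
        linear_combination -hx2
    · apply aux_hasSpectrum_mk (hAherm.add hBherm).neg
      · rw [Matrix.trace_neg, Matrix.trace_add, hAdef, hBdef,
          Matrix.trace_fin_two_of, Matrix.trace_fin_two_of]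
        norm_cast
        linear_combination -htrace
      · rw [Matrix.det_neg, Matrix.det_fin_two]
        simp only [Matrix.add_apply, hAdef, hBdef, Fintype.card_fin]
        norm_num
        norm_cast
        linear_combination hft - hx2
end
end

section
/- Let H be a Hermitian n×n matrix with eigenvalues λ₁ ≥ ⋯ ≥ λₙ and diagonal entries d₁, …, dₙ. Then the diagonal vector d is majorized by λ: for every k, the sum of the k largest dᵢ is at most λ₁ + ⋯ + λ_k, with equality for k = n (Schur's theorem). -/
open Matrix

noncomputable section

lemma schur_ind_sum {n k : ℕ} (hk : k ≤ n) :
    (∑ i ∈ Finset.range n, if i < k then (1:ℝ) else 0) = k := by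
  rw [← Finset.sum_range_add_sum_Ico _ hk]
  rw [Finset.sum_ite_of_true (fun i hi => Finset.mem_range.mp hi),
    Finset.sum_ite_of_false (fun i hi => by simp at hi; omega)]
  simp

lemma schur_key_sum {n : ℕ} (lam c : Fin n → ℝ) (hlam : Antitone lam) (k : ℕ) (hk : k ≤ n)
    (hc0 : ∀ j, 0 ≤ c j) (hc1 : ∀ j, c j ≤ 1) (hsum : ∑ j, c j = k) :
    ∑ j, c j * lam j ≤ ∑ j : Fin n, if (j : ℕ) < k then lam j else 0 := by
  rcases Nat.eq_zero_or_pos n with hn | hn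
  · subst hn; simp
  set b : Fin n → ℝ := fun j => if (j : ℕ) < k then 1 else 0 with hb
  have hbsum : ∑ j, b j = k := by
    rw [hb, Fin.sum_univ_eq_sum_range (fun j => if j < k then (1:ℝ) else 0)]
    exact schur_ind_sum hk
  set t : ℝ := if h : k < n then lam ⟨k, h⟩ else lam ⟨n - 1, by omega⟩ with htdef
  have ht1 : ∀ j : Fin n, (j : ℕ) < k → t ≤ lam j := by
    intro j hj
    rw [htdef]
    split
    · exact hlam (by simpa [Fin.le_def] using hj.le)
    · exact hlam (by simp [Fin.le_def]; omega)
  have ht2 : ∀ j : Fin n, ¬ (j : ℕ) < k → lam j ≤ t := by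
    intro j hj
    rw [htdef]
    split
    · exact hlam (by simp [Fin.le_def]; omega)
    · exact absurd (lt_of_lt_of_le j.2 (by omega)) hj
  have hterm : ∀ j : Fin n, (c j - b j) * (lam j - t) ≤ 0 := by
    intro j
    by_cases hj : (j : ℕ) < k
    · have h1 := hc1 j
      have h2 := ht1 j hj
      have : b j = 1 := by simp [hb, hj]
      nlinarith
    · have h1 := hc0 j
      have h2 := ht2 j hj
      have : b j = 0 := by simp [hb, hj]
      nlinarith
  have h2 : ∑ j, (c j - b j) * (lam j - t) ≤ 0 :=
    Finset.sum_nonpos fun j _ => hterm j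
  have h3 : ∑ j, (c j - b j) * (lam j - t)
      = (∑ j, c j * lam j) - (∑ j, b j * lam j) - ((∑ j, c j) - ∑ j, b j) * t := by
    simp only [sub_mul, mul_sub, Finset.sum_sub_distrib, Finset.sum_mul]
  rw [hsum, hbsum, sub_self, zero_mul, sub_zero] at h3
  have hfin : ∑ j, b j * lam j = ∑ j : Fin n, if (j : ℕ) < k then lam j else 0 := by
    apply Finset.sum_congr rfl
    intro j _
    simp [hb, ite_mul]
  linarith [h3 ▸ h2, hfin.le]

/-- Schur's theorem: the diagonal of a Hermitian matrix is majorized by its spectrum.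
The sum of the diagonal entries over any `k`-element subset is at most the sum of the `k`
largest eigenvalues, with equality when `k = n`. -/
theorem schur_majorization {n : ℕ} {H : Matrix (Fin n) (Fin n) ℂ}
    (lam : Fin n → ℝ) (hlam : Antitone lam) (hs : hasSpectrum H lam) :
    (∀ s : Finset (Fin n),
        ∑ i ∈ s, (H i i).re ≤ ∑ i : Fin n, if (i : ℕ) < s.card then lam i else 0) ∧
    ∑ i : Fin n, (H i i).re = ∑ i : Fin n, lam i := by
  obtain ⟨hA, σ, hσ⟩ := hs
  set U : Matrix (Fin n) (Fin n) ℂ := (hA.eigenvectorUnitary : Matrix (Fin n) (Fin n) ℂ) with hU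
  have hstar : star U * U = 1 := (Matrix.mem_unitaryGroup_iff').mp hA.eigenvectorUnitary.2
  have hself : U * star U = 1 := (Matrix.mem_unitaryGroup_iff).mp hA.eigenvectorUnitary.2
  set w : Fin n → Fin n → ℝ := fun i j => Complex.normSq (U i (σ j)) with hw
  have hwnn : ∀ i j, 0 ≤ w i j := fun i j => Complex.normSq_nonneg _
  have hentry : ∀ i, (H i i).re = ∑ j, w i j * lam j := by
    intro i
    have h1 : H i i = ∑ k, U i k * (hA.eigenvalues k : ℂ) * star (U i k) := by
      conv_lhs => rw [hA.spectral_theorem, Unitary.conjStarAlgAut_apply]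
      rw [Matrix.mul_apply]
      apply Finset.sum_congr rfl
      intro k _
      rw [Matrix.mul_diagonal, Matrix.star_apply]
      simp [hU]
    have h2 : ∀ k, U i k * (hA.eigenvalues k : ℂ) * star (U i k)
        = ((Complex.normSq (U i k) * hA.eigenvalues k : ℝ) : ℂ) := by
      intro k
      rw [mul_comm (U i k) _, mul_assoc]
      rw [show star (U i k) = starRingEnd ℂ (U i k) from rfl, Complex.mul_conj]
      push_cast
      ring
    rw [h1]
    simp only [h2]
    rw [← Complex.ofReal_sum, Complex.ofReal_re]
    rw [← Equiv.sum_comp σ (fun k => Complex.normSq (U i k) * hA.eigenvalues k)]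
    exact Finset.sum_congr rfl fun j _ => by rw [hσ]
  have hrow : ∀ i, ∑ j, w i j = 1 := by
    intro i
    have h1 : (U * star U) i i = 1 := by rw [hself]; simp
    rw [Matrix.mul_apply] at h1
    simp only [Matrix.star_apply] at h1
    have h2 : ∑ k, ((Complex.normSq (U i k) : ℝ) : ℂ) = 1 := by
      rw [← h1]
      exact Finset.sum_congr rfl fun k _ => (Complex.mul_conj _).symm
    rw [← Complex.ofReal_sum] at h2
    have h3 : ∑ k, Complex.normSq (U i k) = 1 := by exact_mod_cast h2
    rw [hw, ← Equiv.sum_comp σ (fun k => Complex.normSq (U i k))] at *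
    exact h3
  have hcol : ∀ j, ∑ i, w i j = 1 := by
    intro j
    have h1 : (star U * U) (σ j) (σ j) = 1 := by rw [hstar]; simp
    rw [Matrix.mul_apply] at h1
    simp only [Matrix.star_apply] at h1
    have h2 : ∑ i, ((Complex.normSq (U i (σ j)) : ℝ) : ℂ) = 1 := by
      rw [← h1]
      refine Finset.sum_congr rfl fun i _ => ?_
      rw [mul_comm]
      exact (Complex.mul_conj _).symm
    rw [← Complex.ofReal_sum] at h2
    exact_mod_cast h2
  constructor
  · intro s
    set c : Fin n → ℝ := fun j => ∑ i ∈ s, w i j with hc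
    have hc0 : ∀ j, 0 ≤ c j := fun j => Finset.sum_nonneg fun i _ => hwnn i j
    have hc1 : ∀ j, c j ≤ 1 := by
      intro j
      calc c j ≤ ∑ i, w i j :=
            Finset.sum_le_sum_of_subset_of_nonneg (Finset.subset_univ s)
              (fun i _ _ => hwnn i j)
        _ = 1 := hcol j
    have hcsum : ∑ j, c j = s.card := by
      rw [hc]
      rw [Finset.sum_comm]
      rw [Finset.sum_congr rfl fun i _ => hrow i]
      simp
    calc ∑ i ∈ s, (H i i).re = ∑ i ∈ s, ∑ j, w i j * lam j :=
          Finset.sum_congr rfl fun i _ => hentry i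
      _ = ∑ j, c j * lam j := by
          rw [Finset.sum_comm]
          exact Finset.sum_congr rfl fun j _ => by rw [hc, Finset.sum_mul]
      _ ≤ _ := schur_key_sum lam c hlam s.card
          (by simpa using Finset.card_le_univ s) hc0 hc1 hcsum
  · calc ∑ i : Fin n, (H i i).re = ∑ i : Fin n, ∑ j, w i j * lam j :=
        Finset.sum_congr rfl fun i _ => hentry i
      _ = ∑ j, (∑ i, w i j) * lam j := by
          rw [Finset.sum_comm]
          exact Finset.sum_congr rfl fun j _ => (Finset.sum_mul _ _ _).symm
      _ = ∑ j : Fin n, lam j := by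
          exact Finset.sum_congr rfl fun j _ => by rw [hcol j, one_mul]
end
end
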